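/- arXiv:1107.4260 — 5 statements merged into one kernel-verified Lean document; each statement's English description precedes it below -/
import Mathlib

section
/- Let V be a finite-dimensional real inner product space and Ψ : V × V → V a bilinear alternating map such that Ψ(X,Y) ∈ span{X,Y} for all X,Y ∈ V. Then there exists p ∈ V such that Ψ(X,Y) = ⟨p,X⟩Y − ⟨p,Y⟩X for all X,Y ∈ V. -/
open scoped RealInnerProductSpace

/-!
For fixed `X`, the map `Ψ X` preserves the line `ℝ ∙ X` and descends to an endomorphism of
`V ⧸ ℝ ∙ X` of which every vector is an eigenvector, so it is a homothety of some ratio `c X`: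
`Ψ X Y ≡ c X • Y` modulo `X`. If `dim V ≥ 2` the ratio `c X` is unique, hence homogeneous in
`X` (if `dim V ≤ 1`, an alternating `Ψ` vanishes). Alternation then identifies the
`X`-component of `Ψ X Y` as `-c Y • X`, and bilinearity of `(X, Y) ↦ c X • Y - c Y • X` forces
`c` to be linear, so that `c = ⟪p, ·⟫` by the Riesz representation theorem.
-/

open Submodule

theorem LinearIndependent.not_pair_smul {R M : Type*} [Ring R] [Nontrivial R] [AddCommGroup M]
    [Module R M] (v : M) (a : R) : ¬LinearIndependent R ![v, a • v] := by
  rw [LinearIndependent.pair_iff]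
  intro h
  exact neg_ne_zero.mpr one_ne_zero (h a (-1) (by rw [neg_one_smul, add_neg_cancel])).2

namespace Submodule

theorem smul_mem_span_singleton_smul {R M : Type*} [CommSemiring R] [AddCommMonoid M]
    [Module R M] {z X : M} (hz : z ∈ R ∙ X) (t : R) : t • z ∈ R ∙ (t • X) := by
  obtain ⟨s, rfl⟩ := mem_span_singleton.mp hz
  exact mem_span_singleton.mpr ⟨s, smul_comm s t X⟩

variable {K V : Type*} [Field K] [AddCommGroup V] [Module K V]

theorem eq_of_sub_smul_mem_span_singleton {X Y Z : V} (hY : Y ∉ K ∙ X) {a b : K}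
    (ha : Z - a • Y ∈ K ∙ X) (hb : Z - b • Y ∈ K ∙ X) : a = b := by
  by_contra hab
  have : (b - a) • Y ∈ K ∙ X := by
    convert sub_mem ha hb using 1
    module
  exact hY ((smul_mem_iff _ (sub_ne_zero.mpr (Ne.symm hab))).mp this)

end Submodule

namespace LinearMap

variable {K V : Type*} [Field K] [AddCommGroup V] [Module K V]

theorem exists_sub_smul_mem_span_singleton {T : V →ₗ[K] V} {X : V}
    (hX : T X ∈ K ∙ X) (h : ∀ Y, T Y ∈ span K {X, Y}) :
    ∃ c : K, ∀ Y, T Y - c • Y ∈ K ∙ X := by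
  have hT : K ∙ X ≤ (K ∙ X).comap T := (span_singleton_le_iff_mem _ _).mpr hX
  set T' := (K ∙ X).mapQ (K ∙ X) T hT
  have heigen (Y : V) : ∃ b : K, T' ((K ∙ X).mkQ Y) = b • (K ∙ X).mkQ Y := by
    obtain ⟨a, b, hab⟩ := mem_span_pair.mp (h Y)
    refine ⟨b, ?_⟩
    rw [mkQ_apply, mapQ_apply, ← mkQ_apply, ← hab]
    simp
  obtain ⟨c, hc⟩ := exists_eq_smul_id_of_forall_notLinearIndependent (f := T') fun v => by
    obtain ⟨Y, rfl⟩ := (K ∙ X).mkQ_surjective v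
    obtain ⟨b, hb⟩ := heigen Y
    exact hb ▸ LinearIndependent.not_pair_smul _ b
  refine ⟨c, fun Y => (Submodule.Quotient.eq _).mp ?_⟩
  simpa [T'] using congr($hc ((K ∙ X).mkQ Y))

section SmulSubSmul

variable {Ψ : V →ₗ[K] V →ₗ[K] V} {c : V → K}

theorem map_smul_of_forall_sub_smul_mem_span_singleton
    (hc : ∀ X Y, Ψ X Y - c X • Y ∈ K ∙ X)
    (hV : ∀ X : V, K ∙ X ≠ ⊤) (t : K) (X : V) :
    c (t • X) = t * c X := by
  obtain ⟨Y, hY⟩ := SetLike.exists_not_mem_of_ne_top _ (hV (t • X))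
  refine eq_of_sub_smul_mem_span_singleton hY (hc (t • X) Y) ?_
  simpa only [map_smul, smul_apply, smul_sub, smul_smul] using
    smul_mem_span_singleton_smul (hc X Y) t

theorem eq_smul_sub_smul_of_notMem_span_singleton (halt : Ψ.IsAlt)
    (hc : ∀ X Y, Ψ X Y - c X • Y ∈ K ∙ X) {X Y : V} (hX : X ≠ 0) (hY : Y ∉ K ∙ X) :
    Ψ X Y = c X • Y - c Y • X := by
  obtain ⟨r, hr⟩ := mem_span_singleton.mp (hc X Y)
  obtain ⟨u, hu⟩ := mem_span_singleton.mp (hc Y X)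
  have hind : LinearIndependent K ![X, Y] := (LinearIndependent.pair_iff' hX).mpr
    fun a h => hY (h ▸ smul_mem _ a (mem_span_singleton_self X))
  obtain ⟨hrc, -⟩ := LinearIndependent.pair_iff.mp hind (r + c Y) (u + c X) <| by
    rw [← halt.neg X Y] at hu
    linear_combination (norm := module) hr + hu
  linear_combination (norm := module) -hr + hrc • X

theorem eq_smul_sub_smul_of_forall_sub_smul_mem_span_singleton (halt : Ψ.IsAlt)
    (hc : ∀ X Y, Ψ X Y - c X • Y ∈ K ∙ X) (hV : ∀ X : V, K ∙ X ≠ ⊤) (X Y : V) :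
    Ψ X Y = c X • Y - c Y • X := by
  have hhom := map_smul_of_forall_sub_smul_mem_span_singleton hc hV
  by_cases hY : Y ∈ K ∙ X
  · obtain ⟨t, rfl⟩ := mem_span_singleton.mp hY
    rw [hhom, map_smul, halt X, smul_zero]
    module
  rcases eq_or_ne X 0 with rfl | hX
  · have hc0 : c 0 = 0 := by simpa using hhom 0 0
    simp [hc0]
  exact eq_smul_sub_smul_of_notMem_span_singleton halt hc hX hY

theorem exists_dual_eq_of_forall_eq_smul_sub_smul [Nontrivial V]
    (hΨ : ∀ X Y, Ψ X Y = c X • Y - c Y • X) : ∃ f : Module.Dual K V, ⇑f = c := by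
  obtain ⟨Y, hY⟩ := exists_ne (0 : V)
  have cancel : ∀ {a b : K}, a • Y = b • Y → a = b := fun h => smul_left_injective K hY h
  refine ⟨{ toFun := c, map_add' := fun X X' => cancel ?_,
            map_smul' := fun t X => cancel (b := t * c X) ?_ }, rfl⟩
  · have h := congr($(map_add Ψ X X') Y)
    simp only [add_apply, hΨ] at h
    linear_combination (norm := module) h
  · have h := congr($(map_smul Ψ t X) Y)
    simp only [smul_apply, hΨ] at h
    linear_combination (norm := module) h

end SmulSubSmul

theorem exists_dual_eq_smul_sub_smul_of_mem_span_pair {Ψ : V →ₗ[K] V →ₗ[K] V}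
    (halt : Ψ.IsAlt) (hspan : ∀ X Y, Ψ X Y ∈ span K {X, Y}) :
    ∃ f : Module.Dual K V, ∀ X Y, Ψ X Y = f X • Y - f Y • X := by
  by_cases hV : ∃ X : V, K ∙ X = ⊤
  · obtain ⟨X, hX⟩ := hV
    have hmem : ∀ Y, Y ∈ K ∙ X := fun Y => hX ▸ mem_top
    refine ⟨0, fun Y Z => ?_⟩
    obtain ⟨a, rfl⟩ := mem_span_singleton.mp (hmem Y)
    obtain ⟨b, rfl⟩ := mem_span_singleton.mp (hmem Z)
    simp [halt X]
  push Not at hV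
  obtain ⟨Y, hY⟩ := SetLike.exists_not_mem_of_ne_top _ (hV 0)
  have : Nontrivial V := nontrivial_of_ne Y 0 (by simpa using hY)
  choose c hc using fun X =>
    exists_sub_smul_mem_span_singleton (T := Ψ X) (by rw [halt X]; exact zero_mem _) (hspan X)
  have hΨ := eq_smul_sub_smul_of_forall_sub_smul_mem_span_singleton halt hc hV
  obtain ⟨f, rfl⟩ := exists_dual_eq_of_forall_eq_smul_sub_smul hΨ
  exact ⟨f, hΨ⟩

end LinearMap

/-- If `Ψ` is a bilinear alternating map on a finite-dimensional real inner product
space `V` with `Ψ X Y ∈ span {X, Y}` for all `X Y`, then there is `p ∈ V` with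
`Ψ X Y = ⟨p,X⟩ Y − ⟨p,Y⟩ X`. -/
theorem stmt0 {V : Type*} [NormedAddCommGroup V] [InnerProductSpace ℝ V]
    [FiniteDimensional ℝ V]
    (Ψ : V →ₗ[ℝ] V →ₗ[ℝ] V)
    (halt : ∀ X : V, Ψ X X = 0)
    (hspan : ∀ X Y : V, Ψ X Y ∈ Submodule.span ℝ ({X, Y} : Set V)) :
    ∃ p : V, ∀ X Y : V, Ψ X Y = ⟪p, X⟫ • Y - ⟪p, Y⟫ • X := by
  obtain ⟨f, hf⟩ := LinearMap.exists_dual_eq_smul_sub_smul_of_mem_span_pair halt hspan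
  refine ⟨(InnerProductSpace.toDual ℝ V).symm (LinearMap.toContinuousLinearMap f),
    fun X Y => ?_⟩
  simp only [InnerProductSpace.toDual_symm_apply, LinearMap.coe_toContinuousLinearMap', hf]
end

section
/- Let V be a real inner product space of dimension at least 4, and let Ψ : V × V → V be a bilinear alternating map. For X,Y ∈ V define the skew operator X∧Y by (X∧Y)Z = ⟨X,Z⟩Y − ⟨Y,Z⟩X. If the cyclic sum σ_{XYZ}(Ψ(X,Y)∧Z) = 0 as an operator on V for all X,Y,Z ∈ V, then Ψ = 0. -/
open scoped RealInnerProductSpace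

/-!
Pair the cyclic identity with a further vector `U` and evaluate it on an orthonormal basis
`e`. Taking `Z = U = e m` for an index `m` different from `i, j, k` leaves only
`⟪Ψ (e i) (e j), e k⟫`, so every component with `k ∉ {i, j}` vanishes. For the remaining
components `u a = ⟪Ψ (e j) (e a), e a⟫`, the identity gives `u c = -u a` for any two distinct
indices `a, c ≠ j`; three such indices (here dimension `4` is used) force `u a = -u a`.
-/

theorem exists_ne_of_four_le_card {ι : Type*} [Fintype ι] (h : 4 ≤ Fintype.card ι) (i j k : ι) :
    ∃ l, l ≠ i ∧ l ≠ j ∧ l ≠ k := by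
  classical
  have hlt : ({i, j, k} : Finset ι).card < (Finset.univ : Finset ι).card :=
    Finset.card_le_three.trans_lt (by rwa [Finset.card_univ])
  obtain ⟨l, -, hl⟩ := Finset.exists_mem_notMem_of_card_lt_card hlt
  simp only [Finset.mem_insert, Finset.mem_singleton, not_or] at hl
  exact ⟨l, hl⟩

section

variable {V : Type*} [NormedAddCommGroup V] [InnerProductSpace ℝ V]

def wedge (X Y Z : V) : V := ⟪X, Z⟫ • Y - ⟪Y, Z⟫ • X

theorem inner_wedge_left (X Y Z U : V) :
    ⟪wedge X Y Z, U⟫ = ⟪X, Z⟫ * ⟪Y, U⟫ - ⟪Y, Z⟫ * ⟪X, U⟫ := by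
  simp only [wedge, inner_sub_left, real_inner_smul_left]

def CyclicWedgeVanishes (Ψ : V →ₗ[ℝ] V →ₗ[ℝ] V) : Prop :=
  ∀ X Y Z W : V, wedge (Ψ X Y) Z W + wedge (Ψ Y Z) X W + wedge (Ψ Z X) Y W = 0

namespace CyclicWedgeVanishes

variable {Ψ : V →ₗ[ℝ] V →ₗ[ℝ] V}

theorem inner_cyclic_sum_eq_zero (hΨ : CyclicWedgeVanishes Ψ) (X Y Z W U : V) :
    ⟪Ψ X Y, W⟫ * ⟪Z, U⟫ - ⟪Z, W⟫ * ⟪Ψ X Y, U⟫ +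
      (⟪Ψ Y Z, W⟫ * ⟪X, U⟫ - ⟪X, W⟫ * ⟪Ψ Y Z, U⟫) +
      (⟪Ψ Z X, W⟫ * ⟪Y, U⟫ - ⟪Y, W⟫ * ⟪Ψ Z X, U⟫) = 0 := by
  have h := congrArg (⟪·, U⟫) (hΨ X Y Z W)
  simpa only [inner_add_left, inner_wedge_left, inner_zero_left] using h

variable {ι : Type*} {e : ι → V}

theorem inner_apply_orthonormal_of_ne (hΨ : CyclicWedgeVanishes Ψ) (he : Orthonormal ℝ e)
    {i j k m : ι} (hki : k ≠ i) (hkj : k ≠ j) (hmi : m ≠ i) (hmj : m ≠ j) (hmk : m ≠ k) :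
    ⟪Ψ (e i) (e j), e k⟫ = 0 := by
  have h := hΨ.inner_cyclic_sum_eq_zero (e i) (e j) (e m) (e k) (e m)
  rw [real_inner_self_eq_norm_sq, he.norm_eq_one, he.inner_eq_zero hmk, he.inner_eq_zero hmi.symm,
    he.inner_eq_zero hki.symm, he.inner_eq_zero hmj.symm, he.inner_eq_zero hkj.symm] at h
  linarith

theorem inner_apply_orthonormal_self_eq_neg (hΨ : CyclicWedgeVanishes Ψ) (hΨalt : Ψ.IsAlt)
    (he : Orthonormal ℝ e) {j a c : ι} (haj : a ≠ j) (hcj : c ≠ j) (hac : a ≠ c) :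
    ⟪Ψ (e j) (e c), e c⟫ = -⟪Ψ (e j) (e a), e a⟫ := by
  have h := hΨ.inner_cyclic_sum_eq_zero (e a) (e j) (e c) (e c) (e a)
  rw [real_inner_self_eq_norm_sq, he.norm_eq_one, real_inner_self_eq_norm_sq, he.norm_eq_one,
    he.inner_eq_zero hac, he.inner_eq_zero hac.symm, he.inner_eq_zero haj.symm,
    he.inner_eq_zero hcj.symm, ← hΨalt.neg (e j) (e a)] at h
  simp only [inner_neg_left] at h
  linarith

theorem inner_apply_orthonormal_self_eq_zero [Fintype ι] (hΨ : CyclicWedgeVanishes Ψ)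
    (hΨalt : Ψ.IsAlt) (he : Orthonormal ℝ e) (hcard : 4 ≤ Fintype.card ι) {i j : ι}
    (hji : j ≠ i) : ⟪Ψ (e i) (e j), e j⟫ = 0 := by
  obtain ⟨c, hci, hcj, -⟩ := exists_ne_of_four_le_card hcard i j j
  obtain ⟨l, hli, hlj, hlc⟩ := exists_ne_of_four_le_card hcard i j c
  have hc := hΨ.inner_apply_orthonormal_self_eq_neg hΨalt he hji hci hcj.symm
  have hl := hΨ.inner_apply_orthonormal_self_eq_neg hΨalt he hci hli hlc.symm
  have hj := hΨ.inner_apply_orthonormal_self_eq_neg hΨalt he hli hji hlj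
  linarith

theorem inner_apply_orthonormal_eq_zero [Fintype ι] (hΨ : CyclicWedgeVanishes Ψ)
    (hΨalt : Ψ.IsAlt) (he : Orthonormal ℝ e) (hcard : 4 ≤ Fintype.card ι) (i j k : ι) :
    ⟪Ψ (e i) (e j), e k⟫ = 0 := by
  rcases eq_or_ne j i with rfl | hji
  · rw [hΨalt.self_eq_zero, inner_zero_left]
  rcases eq_or_ne k j with rfl | hkj
  · exact hΨ.inner_apply_orthonormal_self_eq_zero hΨalt he hcard hji
  rcases eq_or_ne k i with rfl | hki
  · rw [← hΨalt.neg, inner_neg_left,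
      hΨ.inner_apply_orthonormal_self_eq_zero hΨalt he hcard hji.symm, neg_zero]
  obtain ⟨m, hmi, hmj, hmk⟩ := exists_ne_of_four_le_card hcard i j k
  exact hΨ.inner_apply_orthonormal_of_ne he hki hkj hmi hmj hmk

theorem eq_zero [FiniteDimensional ℝ V] (hΨ : CyclicWedgeVanishes Ψ) (hΨalt : Ψ.IsAlt)
    (hdim : 4 ≤ Module.finrank ℝ V) : Ψ = 0 := by
  let b := stdOrthonormalBasis ℝ V
  have hcard : 4 ≤ Fintype.card (Fin (Module.finrank ℝ V)) := by rwa [Fintype.card_fin]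
  refine b.toBasis.ext fun i => b.toBasis.ext fun j =>
    InnerProductSpace.ext_inner_left_basis b.toBasis fun k => ?_
  simp only [OrthonormalBasis.coe_toBasis, LinearMap.zero_apply, inner_zero_right]
  rw [real_inner_comm]
  exact hΨ.inner_apply_orthonormal_eq_zero hΨalt b.orthonormal hcard i j k

end CyclicWedgeVanishes

end

/-- If `Ψ` is a bilinear alternating map on a real inner product space of dimension
at least `4` and the cyclic sum `σ_{XYZ} (Ψ(X,Y) ∧ Z) = 0` as an operator on `V`
(where `(X ∧ Y) Z = ⟨X,Z⟩ Y − ⟨Y,Z⟩ X`), then `Ψ = 0`. -/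
theorem stmt1 {V : Type*} [NormedAddCommGroup V] [InnerProductSpace ℝ V]
    [FiniteDimensional ℝ V] (hdim : 4 ≤ Module.finrank ℝ V)
    (Ψ : V →ₗ[ℝ] V →ₗ[ℝ] V)
    (halt : ∀ X : V, Ψ X X = 0)
    (hcyc : ∀ X Y Z W : V,
      (⟪Ψ X Y, W⟫ • Z - ⟪Z, W⟫ • Ψ X Y) +
      (⟪Ψ Y Z, W⟫ • X - ⟪X, W⟫ • Ψ Y Z) +
      (⟪Ψ Z X, W⟫ • Y - ⟪Y, W⟫ • Ψ Z X) = 0) :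
    Ψ = 0 :=
  CyclicWedgeVanishes.eq_zero hcyc halt hdim
end

section
/- Let V be a real inner product space of dimension n ≥ 4 and let p ∈ V. If σ_{XYZ}(⟨p,X⟩ Y∧Z) = 0 as an operator on V for all X,Y,Z ∈ V, then p = 0. -/
open scoped RealInnerProductSpace

theorem exists_ne_zero_forall_inner_eq_zero {V : Type*} [NormedAddCommGroup V]
    [InnerProductSpace ℝ V] [FiniteDimensional ℝ V] {k : ℕ} (v : Fin k → V)
    (hk : k < Module.finrank ℝ V) : ∃ w ≠ 0, ∀ i, ⟪v i, w⟫ = 0 := by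
  set K := Submodule.span ℝ (Set.range v)
  have hK : K ≠ ⊤ := fun h => by
    have : Module.finrank ℝ K ≤ k := by
      simpa [Set.finrank] using finrank_range_le_card (R := ℝ) v
    rw [h, finrank_top] at this
    omega
  obtain ⟨w, hw, hw0⟩ := Submodule.exists_mem_ne_zero_of_ne_bot
    (mt Submodule.orthogonal_eq_bot_iff.mp hK)
  exact ⟨w, hw0, fun i => (Submodule.mem_orthogonal K w).mp hw (v i)
    (Submodule.subset_span (Set.mem_range_self i))⟩

/-- If `p` is a vector of a real inner product space of dimension `n ≥ 4` such that
the cyclic sum `σ_{XYZ} (⟨p,X⟩ Y ∧ Z) = 0` as an operator on `V` for all `X Y Z`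
(where `(Y ∧ Z) W = ⟨Y,W⟩ Z − ⟨Z,W⟩ Y`), then `p = 0`. -/
theorem stmt2 {V : Type*} [NormedAddCommGroup V] [InnerProductSpace ℝ V]
    [FiniteDimensional ℝ V] (hdim : 4 ≤ Module.finrank ℝ V)
    (p : V)
    (hcyc : ∀ X Y Z W : V,
      ⟪p, X⟫ • (⟪Y, W⟫ • Z - ⟪Z, W⟫ • Y) +
      ⟪p, Y⟫ • (⟪Z, W⟫ • X - ⟪X, W⟫ • Z) +
      ⟪p, Z⟫ • (⟪X, W⟫ • Y - ⟪Y, W⟫ • X) = 0) :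
    p = 0 := by
  by_contra hp
  obtain ⟨Y, hY0, hY⟩ := exists_ne_zero_forall_inner_eq_zero ![p] (by omega)
  obtain ⟨Z, hZ0, hZ⟩ := exists_ne_zero_forall_inner_eq_zero ![p, Y] (by omega)
  have hpY : ⟪p, Y⟫ = 0 := hY 0
  have hpZ : ⟪p, Z⟫ = 0 := hZ 0
  have hZY : ⟪Z, Y⟫ = 0 := real_inner_comm Z Y ▸ hZ 1
  -- X = p, W = Y kills every term except ⟪p, p⟫ ⟪Y, Y⟫ Z
  have key := hcyc p Y Z Y
  simp only [hpY, hpZ, hZY, zero_smul, smul_zero, add_zero, sub_zero, smul_smul,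
    smul_eq_zero, mul_eq_zero, inner_self_eq_zero] at key
  tauto
end

section
/- Let V be a real inner product space of dimension n ≥ 2 and τ a symmetric traceless operator on V with exactly two distinct eigenvalues λ and −λ (λ ≠ 0), with eigenspaces of dimensions p and q, p + q = n. Then the kernel of the induced operator S_τ : so(V) → so(V), S_τ(T) = τT + Tτ, is exactly the span of e_s∧e_a where e_s runs over an orthonormal basis of the λ-eigenspace and e_a over an orthonormal basis of the (−λ)-eigenspace; in particular dim ker S_τ = pq. -/
/-!
Write `ε_i = ±1` for the block of `e_i`, so `τ e_i = ε_i λ e_i`. Pairing `τA + Aτ = 0` with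
`e_k, e_l` gives `(ε_k + ε_l) λ ⟪e_k, A e_l⟫ = 0`, so a skew `A` in the kernel has nonzero
entries only between the two blocks. Since every skew `A` satisfies
`2A = ∑_{i,j} ⟪e_j, A e_i⟫ e_i ∧ e_j`, such an `A` lies in the span of the cross wedges,
which conversely anticommute with `τ`. The cross wedges are linearly independent, as the
matrix entries `B ↦ ⟪e_a, B e_s⟫` form a dual family, so their span has dimension `pq`.
-/

open scoped RealInnerProductSpace

/-- The skew-symmetric operator `X ∧ Y : Z ↦ ⟨X,Z⟩ Y − ⟨Y,Z⟩ X` as a linear map. -/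
noncomputable def wedgeL {V : Type*} [NormedAddCommGroup V] [InnerProductSpace ℝ V]
    (X Y : V) : V →ₗ[ℝ] V where
  toFun Z := ⟪X, Z⟫ • Y - ⟪Y, Z⟫ • X
  map_add' a b := by
    simp only [inner_add_right, add_smul]
    abel
  map_smul' r a := by
    simp only [real_inner_smul_right, RingHom.id_apply, mul_smul, smul_sub]

section

variable {V : Type*} [NormedAddCommGroup V] [InnerProductSpace ℝ V]

@[simp]
lemma wedgeL_apply (X Y Z : V) : wedgeL X Y Z = ⟪X, Z⟫ • Y - ⟪Y, Z⟫ • X := rfl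

lemma wedgeL_swap (X Y : V) : wedgeL Y X = -wedgeL X Y := by
  ext Z
  simp

noncomputable def anticommutator (τ : V →ₗ[ℝ] V) : (V →ₗ[ℝ] V) →ₗ[ℝ] V →ₗ[ℝ] V :=
  LinearMap.mulLeft ℝ τ + LinearMap.mulRight ℝ τ

lemma anticommutator_apply (τ A : V →ₗ[ℝ] V) : anticommutator τ A = τ ∘ₗ A + A ∘ₗ τ := rfl

lemma inner_apply_eq_zero_of_anticommutator_eq_zero {τ A : V →ₗ[ℝ] V} (hτ : τ.IsSymmetric)
    (hA : anticommutator τ A = 0) {x y : V} {μ ν : ℝ} (hx : τ x = μ • x) (hy : τ y = ν • y)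
    (hμν : μ + ν ≠ 0) : ⟪x, A y⟫ = 0 := by
  have h : ⟪x, τ (A y)⟫ + ⟪x, A (τ y)⟫ = 0 := by
    simpa [anticommutator_apply, inner_add_right] using congr(⟪x, $hA y⟫)
  rw [← hτ, hx, hy, map_smul, real_inner_smul_left, real_inner_smul_right, ← add_mul] at h
  exact (mul_eq_zero.mp h).resolve_left hμν

lemma anticommutator_wedgeL_eq_zero {τ : V →ₗ[ℝ] V} (hτ : τ.IsSymmetric) {x y : V} {μ : ℝ}
    (hx : τ x = μ • x) (hy : τ y = -μ • y) : anticommutator τ (wedgeL x y) = 0 := by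
  ext z
  have hxz : ⟪x, τ z⟫ = μ * ⟪x, z⟫ := by rw [← hτ, hx, real_inner_smul_left]
  have hyz : ⟪y, τ z⟫ = -μ * ⟪y, z⟫ := by rw [← hτ, hy, real_inner_smul_left]
  simp only [anticommutator_apply, LinearMap.add_apply, LinearMap.comp_apply, wedgeL_apply,
    map_sub, map_smul, hx, hy, hxz, hyz, LinearMap.zero_apply]
  module

lemma two_smul_eq_sum_wedgeL {ι : Type*} [Fintype ι] (b : OrthonormalBasis ι ℝ V)
    {A : V →ₗ[ℝ] V} (hA : ∀ x y, ⟪A x, y⟫ = -⟪x, A y⟫) :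
    (2 : ℝ) • A = ∑ i, ∑ j, ⟪b j, A (b i)⟫ • wedgeL (b i) (b j) := by
  classical
  refine b.toBasis.ext fun l => ?_
  have hskew : ∀ i, ⟪b l, A (b i)⟫ = -⟪b i, A (b l)⟫ := fun i => by
    rw [real_inner_comm, hA]
  simp only [OrthonormalBasis.coe_toBasis, LinearMap.smul_apply, LinearMap.sum_apply,
    wedgeL_apply, smul_sub, Finset.sum_sub_distrib, orthonormal_iff_ite.mp b.orthonormal,
    ite_smul, one_smul, zero_smul, smul_ite, smul_zero, Finset.sum_ite_irrel, Finset.sum_const_zero,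
    Finset.sum_ite_eq', Finset.mem_univ, if_true, hskew, neg_smul, Finset.sum_neg_distrib,
    b.sum_repr']
  module

lemma linearIndependent_wedgeL {ι : Type*} {e : ι → V} (he : Orthonormal ℝ e) (P : ι → Prop) :
    LinearIndependent ℝ fun x : {x : ι × ι // P x.1 ∧ ¬P x.2} => wedgeL (e x.1.1) (e x.1.2) := by
  classical
  let entry (x : {x : ι × ι // P x.1 ∧ ¬P x.2}) : Module.Dual ℝ (V →ₗ[ℝ] V) :=
    innerₛₗ ℝ (e x.1.2) ∘ₗ LinearMap.applyₗ (e x.1.1)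
  have hentry : ∀ x y, entry x (wedgeL (e y.1.1) (e y.1.2)) = if y = x then 1 else 0 := by
    rintro ⟨⟨s, a⟩, hs, ha⟩ ⟨⟨s', a'⟩, hs', ha'⟩
    have has : a' ≠ s := fun h => ha' (h ▸ hs)
    rcases eq_or_ne s' s with rfl | hss
    · simp [entry, orthonormal_iff_ite.mp he, he.1, has, eq_comm]
    · simp [entry, orthonormal_iff_ite.mp he, has, hss]
  exact .of_pairwise_dual_eq_zero_one _ entry (fun x y hxy => (hentry x y).trans (if_neg hxy.symm))
    (fun x => (hentry x x).trans (if_pos rfl))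

lemma finrank_span_wedgeL {ι : Type*} [Fintype ι] {e : ι → V} (he : Orthonormal ℝ e)
    (P : ι → Prop) [DecidablePred P] :
    Module.finrank ℝ (Submodule.span ℝ
        {B : V →ₗ[ℝ] V | ∃ s a, P s ∧ ¬P a ∧ B = wedgeL (e s) (e a)}) =
      Fintype.card {i // P i} * Fintype.card {i // ¬P i} := by
  have hrange : {B : V →ₗ[ℝ] V | ∃ s a, P s ∧ ¬P a ∧ B = wedgeL (e s) (e a)} =
      Set.range fun x : {x : ι × ι // P x.1 ∧ ¬P x.2} => wedgeL (e x.1.1) (e x.1.2) := by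
    ext B
    simp [eq_comm, and_assoc]
  rw [hrange, finrank_span_eq_card (linearIndependent_wedgeL he P), ← Fintype.card_prod]
  exact Fintype.card_congr (Equiv.subtypeProdEquivProd (p := P) (q := fun i => ¬P i))

theorem anticommutator_eq_zero_iff_mem_span_wedgeL {ι : Type*} [Fintype ι]
    (b : OrthonormalBasis ι ℝ V) (P : ι → Prop) [DecidablePred P] {τ : V →ₗ[ℝ] V}
    (hτ : τ.IsSymmetric) {lam : ℝ} (hlam : lam ≠ 0)
    (heig : ∀ i, τ (b i) = (if P i then lam else -lam) • b i)
    {A : V →ₗ[ℝ] V} (hA : ∀ x y, ⟪A x, y⟫ = -⟪x, A y⟫) :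
    anticommutator τ A = 0 ↔
      A ∈ Submodule.span ℝ {B | ∃ s a, P s ∧ ¬P a ∧ B = wedgeL (b s) (b a)} := by
  set W := Submodule.span ℝ {B | ∃ s a, P s ∧ ¬P a ∧ B = wedgeL (b s) (b a)}
  constructor
  · intro hker
    have hblock : ∀ i j, (P i ↔ P j) → ⟪b j, A (b i)⟫ = 0 := fun i j hij =>
      inner_apply_eq_zero_of_anticommutator_eq_zero hτ hker (heig j) (heig i) <| by
        by_cases hi : P i <;> simp [hi, ← hij, ← two_mul, hlam]
    have hterm : ∀ i j, ⟪b j, A (b i)⟫ • wedgeL (b i) (b j) ∈ W := by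
      intro i j
      by_cases hi : P i <;> by_cases hj : P j
      · simp [hblock i j (iff_of_true hi hj)]
      · exact W.smul_mem _ (Submodule.subset_span ⟨i, j, hi, hj, rfl⟩)
      · rw [wedgeL_swap, smul_neg]
        exact W.neg_mem (W.smul_mem _ (Submodule.subset_span ⟨j, i, hj, hi, rfl⟩))
      · simp [hblock i j (iff_of_false hi hj)]
    have h2A : (2 : ℝ) • A ∈ W := two_smul_eq_sum_wedgeL b hA ▸
      W.sum_mem fun i _ => W.sum_mem fun j _ => hterm i j
    exact (W.smul_mem_iff two_ne_zero).mp h2A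
  · intro hmem
    refine LinearMap.mem_ker.mp (Submodule.span_le.mpr ?_ hmem)
    rintro _ ⟨s, a, hs, ha, rfl⟩
    exact anticommutator_wedgeL_eq_zero hτ (by simpa [hs] using heig s)
      (by simpa [ha] using heig a)

end

theorem stmt9_general {V : Type*} [NormedAddCommGroup V] [InnerProductSpace ℝ V]
    {n p q : ℕ} (hpq : p + q = n)
    (e : Fin n → V) (he : Orthonormal ℝ e)
    (hbasis : Submodule.span ℝ (Set.range e) = ⊤)
    (τ : V →ₗ[ℝ] V) (hτ : ∀ x y : V, ⟪τ x, y⟫ = ⟪x, τ y⟫)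
    (lam : ℝ) (hlam : lam ≠ 0)
    (heig : ∀ i : Fin n, τ (e i) = (if (i : ℕ) < p then lam else -lam) • e i) :
    (∀ A : V →ₗ[ℝ] V, (∀ x y : V, ⟪A x, y⟫ = - ⟪x, A y⟫) →
      (τ ∘ₗ A + A ∘ₗ τ = 0 ↔
        A ∈ Submodule.span ℝ
          {B : V →ₗ[ℝ] V | ∃ s a : Fin n, (s : ℕ) < p ∧ p ≤ (a : ℕ) ∧
            B = wedgeL (e s) (e a)})) ∧
    Module.finrank ℝ
      (Submodule.span ℝ
        {B : V →ₗ[ℝ] V | ∃ s a : Fin n, (s : ℕ) < p ∧ p ≤ (a : ℕ) ∧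
          B = wedgeL (e s) (e a)}) = p * q := by
  have hgen : {B : V →ₗ[ℝ] V | ∃ s a : Fin n, (s : ℕ) < p ∧ p ≤ (a : ℕ) ∧
      B = wedgeL (e s) (e a)} =
      {B | ∃ s a : Fin n, (s : ℕ) < p ∧ ¬(a : ℕ) < p ∧ B = wedgeL (e s) (e a)} := by
    simp only [not_lt]
  obtain ⟨b, rfl⟩ : ∃ b : OrthonormalBasis (Fin n) ℝ V, ⇑b = e :=
    ⟨.mk he hbasis.ge, OrthonormalBasis.coe_mk he hbasis.ge⟩
  rw [hgen]
  refine ⟨fun A hA => ?_, ?_⟩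
  · rw [← anticommutator_apply]
    exact anticommutator_eq_zero_iff_mem_span_wedgeL b _ hτ hlam heig hA
  · rw [finrank_span_wedgeL b.orthonormal, Fintype.card_fin_lt_of_le (by omega),
      Fintype.card_subtype_compl, Fintype.card_fin_lt_of_le (by omega), Fintype.card_fin]
    congr 1
    omega

/-- Let `τ` be a symmetric operator on an `n`-dimensional real inner product space
with exactly the two eigenvalues `lam ≠ 0` (on the span of `e_i`, `i < p`) and `−lam`
(on the span of `e_a`, `a ≥ p`), `p + q = n`.  Then the kernel of
`S_τ : so(V) → so(V)`, `S_τ T = τ T + T τ`, is exactly the span of the wedges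
`e_s ∧ e_a` with `s < p ≤ a`, and this span has dimension `p q`. -/
theorem stmt9 {V : Type*} [NormedAddCommGroup V] [InnerProductSpace ℝ V]
    [FiniteDimensional ℝ V] {n p q : ℕ} (hpq : p + q = n)
    (hp : 0 < p) (hq : 0 < q)
    (e : Fin n → V) (he : Orthonormal ℝ e)
    (hbasis : Submodule.span ℝ (Set.range e) = ⊤)
    (τ : V →ₗ[ℝ] V) (hτ : ∀ x y : V, ⟪τ x, y⟫ = ⟪x, τ y⟫)
    (lam : ℝ) (hlam : lam ≠ 0)
    (heig : ∀ i : Fin n, τ (e i) = (if (i : ℕ) < p then lam else -lam) • e i) :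
    (∀ A : V →ₗ[ℝ] V, (∀ x y : V, ⟪A x, y⟫ = - ⟪x, A y⟫) →
      (τ ∘ₗ A + A ∘ₗ τ = 0 ↔
        A ∈ Submodule.span ℝ
          {B : V →ₗ[ℝ] V | ∃ s a : Fin n, (s : ℕ) < p ∧ p ≤ (a : ℕ) ∧
            B = wedgeL (e s) (e a)})) ∧
    Module.finrank ℝ
      (Submodule.span ℝ
        {B : V →ₗ[ℝ] V | ∃ s a : Fin n, (s : ℕ) < p ∧ p ≤ (a : ℕ) ∧
          B = wedgeL (e s) (e a)}) = p * q :=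
  stmt9_general hpq e he hbasis τ hτ lam hlam heig
end

section
/- In the setting of a symmetric pair g = h ⊕ m with ad-invariant inner product, the adjoint of the map ad : h → so(m), U ↦ ad_U|_m, with respect to the trace inner product ⟨A₁,A₂⟩ = Tr(A₁A₂ᵗ) on so(m) (scaled so that ⟨ad_U, X∧Y⟩ = 2⟨U,[X,Y]⟩), is twice the boundary map ∂(X∧Y) = [X,Y]. Consequently, the orthogonal complement of ad(h) in so(m) equals ker ∂. -/
open scoped RealInnerProductSpace

/-!
Both sides of the identity are linear in `A`, and skew maps are spanned by the wedges, so it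
suffices to take `A = X ∧ Y`. Then `(X ∧ Y)ᵗ = Y ∧ X` is a sum of two rank-one maps, whence
`Tr (F (X ∧ Y)ᵗ) = ⟪Y, F X⟫ - ⟪X, F Y⟫ = 2 ⟪F X, Y⟫` for skew `F`, and with `F = ad_U`
invariance turns this into `2 ⟪U, [X, Y]⟫`. Taking `U = ∂A` in the identity gives the kernel
statement.
-/

section Wedge

variable {V : Type*} [NormedAddCommGroup V] [InnerProductSpace ℝ V]

lemma wedgeL_eq_sub_smulRight (X Y : V) :
    wedgeL X Y = (innerₛₗ ℝ X).smulRight Y - (innerₛₗ ℝ Y).smulRight X := by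
  ext Z
  simp [wedgeL]

lemma trace_comp_wedgeL [FiniteDimensional ℝ V] (F : V →ₗ[ℝ] V) (X Y : V) :
    LinearMap.trace ℝ V (F ∘ₗ wedgeL X Y) = ⟪X, F Y⟫ - ⟪Y, F X⟫ := by
  have hsmulRight : ∀ X Y : V,
      F ∘ₗ (innerₛₗ ℝ X).smulRight Y = (innerₛₗ ℝ X).smulRight (F Y) := by
    intro X Y
    ext Z
    simp
  rw [wedgeL_eq_sub_smulRight, LinearMap.comp_sub, hsmulRight, hsmulRight, map_sub,
    LinearMap.trace_smulRight, LinearMap.trace_smulRight, innerₛₗ_apply_apply,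
    innerₛₗ_apply_apply]

lemma adjoint_wedgeL [FiniteDimensional ℝ V] (X Y : V) :
    LinearMap.adjoint (wedgeL X Y) = wedgeL Y X := by
  refine ((LinearMap.eq_adjoint_iff _ _).mpr fun Z Z' => ?_).symm
  simp only [wedgeL, LinearMap.coe_mk, AddHom.coe_mk, inner_sub_left, inner_sub_right,
    real_inner_smul_left, real_inner_smul_right]
  rw [real_inner_comm Z X, real_inner_comm Z Y]
  ring

lemma trace_comp_adjoint_wedgeL [FiniteDimensional ℝ V] {F : V →ₗ[ℝ] V}
    (hF : ∀ x y : V, ⟪F x, y⟫ = - ⟪x, F y⟫) (X Y : V) :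
    LinearMap.trace ℝ V (F ∘ₗ LinearMap.adjoint (wedgeL X Y)) = 2 * ⟪F X, Y⟫ := by
  rw [adjoint_wedgeL, trace_comp_wedgeL, real_inner_comm (F X) Y, hF]
  ring

end Wedge

lemma trace_comp_adjoint_eq_two_inner {V W : Type*} [NormedAddCommGroup V]
    [InnerProductSpace ℝ V] [FiniteDimensional ℝ V] [NormedAddCommGroup W]
    [InnerProductSpace ℝ W] {br : V →ₗ[ℝ] V →ₗ[ℝ] W} {act : W →ₗ[ℝ] V →ₗ[ℝ] V}
    (hact_skew : ∀ (U : W) (x y : V), ⟪act U x, y⟫ = - ⟪x, act U y⟫)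
    (hinv : ∀ (U : W) (X Y : V), ⟪U, br X Y⟫ = ⟪act U X, Y⟫)
    {D : (V →ₗ[ℝ] V) →ₗ[ℝ] W} (hD : ∀ X Y : V, D (wedgeL X Y) = br X Y) (U : W)
    {A : V →ₗ[ℝ] V} (hA : A ∈ Submodule.span ℝ {B : V →ₗ[ℝ] V | ∃ X Y : V, B = wedgeL X Y}) :
    LinearMap.trace ℝ V (act U ∘ₗ LinearMap.adjoint A) = 2 * ⟪U, D A⟫ := by
  induction hA using Submodule.span_induction with
  | mem B hB =>
    obtain ⟨X, Y, rfl⟩ := hB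
    rw [trace_comp_adjoint_wedgeL (hact_skew U), hD, hinv]
  | zero => simp
  | add B C _ _ hB hC =>
    rw [map_add, LinearMap.comp_add, map_add, hB, hC, map_add, inner_add_right, mul_add]
  | smul r B _ hB =>
    rw [map_smul, LinearMap.comp_smul, map_smul, hB, map_smul, real_inner_smul_right,
      smul_eq_mul, mul_left_comm]

theorem stmt16_general {V W : Type*} [NormedAddCommGroup V] [InnerProductSpace ℝ V]
    [FiniteDimensional ℝ V] [NormedAddCommGroup W] [InnerProductSpace ℝ W]
    (br : V →ₗ[ℝ] V →ₗ[ℝ] W)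
    (act : W →ₗ[ℝ] V →ₗ[ℝ] V)
    (hact_skew : ∀ (U : W) (x y : V), ⟪act U x, y⟫ = - ⟪x, act U y⟫)
    (hinv : ∀ (U : W) (X Y : V), ⟪U, br X Y⟫ = ⟪act U X, Y⟫)
    (D : (V →ₗ[ℝ] V) →ₗ[ℝ] W) (hD : ∀ X Y : V, D (wedgeL X Y) = br X Y)
    (hspan : ∀ A : V →ₗ[ℝ] V, (∀ x y : V, ⟪A x, y⟫ = - ⟪x, A y⟫) →
      A ∈ Submodule.span ℝ {B : V →ₗ[ℝ] V | ∃ X Y : V, B = wedgeL X Y}) :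
    (∀ (U : W) (A : V →ₗ[ℝ] V), (∀ x y : V, ⟪A x, y⟫ = - ⟪x, A y⟫) →
      LinearMap.trace ℝ V (act U ∘ₗ LinearMap.adjoint A) = 2 * ⟪U, D A⟫) ∧
    (∀ A : V →ₗ[ℝ] V, (∀ x y : V, ⟪A x, y⟫ = - ⟪x, A y⟫) →
      ((∀ U : W, LinearMap.trace ℝ V (act U ∘ₗ LinearMap.adjoint A) = 0) ↔
        D A = 0)) := by
  have adjoint_ad : ∀ (U : W) (A : V →ₗ[ℝ] V), (∀ x y : V, ⟪A x, y⟫ = - ⟪x, A y⟫) →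
      LinearMap.trace ℝ V (act U ∘ₗ LinearMap.adjoint A) = 2 * ⟪U, D A⟫ :=
    fun U A hA => trace_comp_adjoint_eq_two_inner hact_skew hinv hD U (hspan A hA)
  refine ⟨adjoint_ad, fun A hA => ?_⟩
  simp only [adjoint_ad _ A hA, mul_eq_zero, two_ne_zero, false_or]
  exact ⟨fun h => inner_self_eq_zero.mp (h (D A)), fun h U => h ▸ inner_zero_right U⟩

/-- In the setting of a symmetric pair `g = h ⊕ m` with ad-invariant inner product
(`act U = ad_U|_m` for `U ∈ h`, `br X Y = [X, Y] ∈ h` for `X, Y ∈ m`, and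
`∂ : so(m) → h` the boundary map with `∂(X ∧ Y) = [X, Y]`), with respect to the trace
inner product `⟨A₁, A₂⟩ = Tr(A₁ A₂ᵗ)` on `so(m)` one has
`⟨ad_U, A⟩ = 2 ⟨U, ∂ A⟩` for every skew-symmetric `A` (the adjoint of `ad` is `2∂`);
consequently the orthogonal complement of `ad(h)` in `so(m)` equals `ker ∂`. -/
theorem stmt16 {V W : Type*} [NormedAddCommGroup V] [InnerProductSpace ℝ V]
    [FiniteDimensional ℝ V] [NormedAddCommGroup W] [InnerProductSpace ℝ W]
    [FiniteDimensional ℝ W]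
    (br : V →ₗ[ℝ] V →ₗ[ℝ] W) (hbr : ∀ X Y : V, br X Y = - br Y X)
    (act : W →ₗ[ℝ] V →ₗ[ℝ] V)
    (hact_skew : ∀ (U : W) (x y : V), ⟪act U x, y⟫ = - ⟪x, act U y⟫)
    (hinv : ∀ (U : W) (X Y : V), ⟪U, br X Y⟫ = ⟪act U X, Y⟫)
    (D : (V →ₗ[ℝ] V) →ₗ[ℝ] W) (hD : ∀ X Y : V, D (wedgeL X Y) = br X Y)
    (hspan : ∀ A : V →ₗ[ℝ] V, (∀ x y : V, ⟪A x, y⟫ = - ⟪x, A y⟫) →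
      A ∈ Submodule.span ℝ {B : V →ₗ[ℝ] V | ∃ X Y : V, B = wedgeL X Y}) :
    (∀ (U : W) (A : V →ₗ[ℝ] V), (∀ x y : V, ⟪A x, y⟫ = - ⟪x, A y⟫) →
      LinearMap.trace ℝ V (act U ∘ₗ LinearMap.adjoint A) = 2 * ⟪U, D A⟫) ∧
    (∀ A : V →ₗ[ℝ] V, (∀ x y : V, ⟪A x, y⟫ = - ⟪x, A y⟫) →
      ((∀ U : W, LinearMap.trace ℝ V (act U ∘ₗ LinearMap.adjoint A) = 0) ↔
        D A = 0)) :=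
  stmt16_general br act hact_skew hinv D hD hspan
end
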